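/- (Proposition aVGcf) Let Z be a standard Gaussian random variable and let V be a Gamma(α, β) distributed random variable independent of Z, with α, β > 0. Let θ ∈ ℝ and σ > 0 be fixed. Then the characteristic function of the Variance Gamma variable X = θV + σ√V · Z is ψ_X(t) = (1 − iθt/β + t²σ²/(2β))^{-α} for all real t, where the complex power is the principal branch. -/

import Mathlib

/-!
Conditionally on `V = v`, the variable `X` is Gaussian with mean `θ v` and variance `σ² v`, so
its conditional characteristic function is `exp ((i t θ - t² σ² / 2) v)`. Hence `ψ_X(t)` is the
complex moment generating function of `Gamma(α, β)` at `w = i t θ - t² σ² / 2`. For real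
`w < β` this is the Gamma integral `(1 - w / β)^(-α)`; both sides are holomorphic on the
half-plane `Re w < β`, so the identity theorem extends the formula to complex `w`, in particular
to our `w`, whose real part is `≤ 0`.
-/

open MeasureTheory ProbabilityTheory Complex

open Set Filter Topology

lemma integrableOn_rpow_mul_exp_neg_mul_Ioi {a b : ℝ} (ha : 0 < a) (hb : 0 < b) :
    IntegrableOn (fun x : ℝ ↦ x ^ (a - 1) * Real.exp (-(b * x))) (Ioi 0) := by
  simpa [Real.rpow_one] using
    _root_.integrableOn_rpow_mul_exp_neg_mul_rpow (p := 1) (by linarith) one_pos hb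

theorem AnalyticOnNhd.eqOn_of_preconnected_of_eventuallyEq_real {E : Type*}
    [NormedAddCommGroup E] [NormedSpace ℂ E] {f g : ℂ → E} {U : Set ℂ}
    (hf : AnalyticOnNhd ℂ f U) (hg : AnalyticOnNhd ℂ g U) (hU : IsPreconnected U) {x₀ : ℝ}
    (hx₀ : (x₀ : ℂ) ∈ U) (hfg : ∀ᶠ x : ℝ in 𝓝 x₀, f x = g x) : EqOn f g U := by
  refine hf.eqOn_of_preconnected_of_frequently_eq hg hU hx₀ ?_
  have hreal : Tendsto ((↑) : ℝ → ℂ) (𝓝[≠] x₀) (𝓝[≠] (x₀ : ℂ)) :=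
    continuous_ofReal.continuousWithinAt.tendsto_nhdsWithin fun x hx ↦ by simpa using hx
  exact hreal.frequently (hfg.filter_mono nhdsWithin_le_nhds).frequently

namespace ProbabilityTheory

variable {a r t : ℝ}

lemma gammaPDFReal_mul_exp_eq_indicator (x : ℝ) :
    gammaPDFReal a r x * Real.exp (t * x) = (Ici 0).indicator
      (fun x ↦ r ^ a / Real.Gamma a * (x ^ (a - 1) * Real.exp (-((r - t) * x)))) x := by
  by_cases hx : 0 ≤ x
  · rw [indicator_of_mem (mem_Ici.mpr hx), gammaPDFReal, if_pos hx, mul_assoc, mul_assoc,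
      ← Real.exp_add]
    ring_nf
  · rw [indicator_of_notMem (by simpa using hx), gammaPDFReal, if_neg hx, zero_mul]

lemma integrable_gammaPDFReal_mul_exp (ha : 0 < a) (ht : t < r) :
    Integrable (fun x ↦ gammaPDFReal a r x * Real.exp (t * x)) := by
  simp_rw [gammaPDFReal_mul_exp_eq_indicator]
  rw [integrable_indicator_iff measurableSet_Ici, integrableOn_Ici_iff_integrableOn_Ioi]
  exact (integrableOn_rpow_mul_exp_neg_mul_Ioi ha (sub_pos.mpr ht)).const_mul _

lemma integral_gammaPDFReal_mul_exp (ha : 0 < a) (hr : 0 < r) (ht : t < r) :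
    ∫ x, gammaPDFReal a r x * Real.exp (t * x) = (1 - t / r) ^ (-a) := by
  have hrt : 0 < r - t := sub_pos.mpr ht
  simp_rw [gammaPDFReal_mul_exp_eq_indicator]
  rw [integral_indicator measurableSet_Ici, integral_Ici_eq_integral_Ioi, integral_const_mul,
    Real.integral_rpow_mul_exp_neg_mul_Ioi ha hrt]
  have hΓ : Real.Gamma a ≠ 0 := (Real.Gamma_pos_of_pos ha).ne'
  calc r ^ a / Real.Gamma a * ((1 / (r - t)) ^ a * Real.Gamma a)
      = (r * (1 / (r - t))) ^ a := by
        rw [Real.mul_rpow hr.le (by positivity)]; field_simp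
    _ = ((1 - t / r)⁻¹) ^ a := by congr 1; field_simp
    _ = (1 - t / r) ^ (-a) := by
        rw [Real.inv_rpow (by field_simp; linarith), Real.rpow_neg (by field_simp; linarith)]

lemma integral_gammaMeasure {E : Type*} [NormedAddCommGroup E] [NormedSpace ℝ E]
    (ha : 0 < a) (hr : 0 < r) (g : ℝ → E) :
    ∫ x, g x ∂gammaMeasure a r = ∫ x, gammaPDFReal a r x • g x := by
  rw [gammaMeasure, integral_withDensity_eq_integral_toReal_smul (f := gammaPDF a r)
    (measurable_gammaPDFReal a r).ennreal_ofReal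
    (ae_of_all _ fun _ ↦ ENNReal.ofReal_lt_top)]
  simp_rw [gammaPDF, ENNReal.toReal_ofReal (gammaPDFReal_nonneg ha hr _)]

lemma integrable_gammaMeasure_iff {E : Type*} [NormedAddCommGroup E] [NormedSpace ℝ E]
    (ha : 0 < a) (hr : 0 < r) {g : ℝ → E} :
    Integrable g (gammaMeasure a r) ↔ Integrable (fun x ↦ gammaPDFReal a r x • g x) := by
  rw [gammaMeasure, integrable_withDensity_iff_integrable_smul' (f := gammaPDF a r)
    (measurable_gammaPDFReal a r).ennreal_ofReal
    (ae_of_all _ fun _ ↦ ENNReal.ofReal_lt_top)]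
  simp_rw [gammaPDF, ENNReal.toReal_ofReal (gammaPDFReal_nonneg ha hr _)]

lemma ae_nonneg_gammaMeasure (a r : ℝ) : ∀ᵐ x ∂gammaMeasure a r, 0 ≤ x := by
  rw [gammaMeasure, ae_withDensity_iff (f := gammaPDF a r)
    (measurable_gammaPDFReal a r).ennreal_ofReal]
  exact ae_of_all _ fun x hx ↦ not_lt.mp fun hneg ↦ hx (gammaPDF_of_neg hneg)

lemma Iio_subset_integrableExpSet_gammaMeasure (ha : 0 < a) (hr : 0 < r) :
    Iio r ⊆ integrableExpSet id (gammaMeasure a r) := fun _ hs ↦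
  (integrable_gammaMeasure_iff ha hr).mpr (integrable_gammaPDFReal_mul_exp ha hs)

lemma mgf_id_gammaMeasure (ha : 0 < a) (hr : 0 < r) (ht : t < r) :
    mgf id (gammaMeasure a r) t = (1 - t / r) ^ (-a) := by
  rw [mgf, integral_gammaMeasure ha hr]
  exact integral_gammaPDFReal_mul_exp ha hr ht

lemma complexMGF_id_gammaMeasure (ha : 0 < a) (hr : 0 < r) {z : ℂ} (hz : z.re < r) :
    complexMGF id (gammaMeasure a r) z = (1 - z / r) ^ (-(a : ℂ)) := by
  have hstrip : {z : ℂ | z.re < r} ⊆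
      {z | z.re ∈ interior (integrableExpSet id (gammaMeasure a r))} :=
    fun z hz ↦ interior_maximal (Iio_subset_integrableExpSet_gammaMeasure ha hr) isOpen_Iio hz
  have hslit (z : ℂ) (hz : z.re < r) : 1 - z / r ∈ slitPlane := by
    rw [mem_slitPlane_iff, sub_re, one_re, div_ofReal_re]
    exact Or.inl (by rw [sub_pos, div_lt_one hr]; exact hz)
  refine AnalyticOnNhd.eqOn_of_preconnected_of_eventuallyEq_real
    (g := fun z ↦ (1 - z / r) ^ (-(a : ℂ))) (analyticOnNhd_complexMGF.mono hstrip)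
    (fun z hz ↦ (analyticAt_const.sub analyticAt_id.div_const).cpow analyticAt_const (hslit z hz))
    (convex_halfSpace_re_lt r).isPreconnected (x₀ := 0) (by simpa using hr) ?_ hz
  filter_upwards [Iio_mem_nhds hr] with x hx
  have hx' : 0 ≤ 1 - x / r := by rw [sub_nonneg, div_le_one hr]; exact hx.le
  rw [complexMGF_ofReal, mgf_id_gammaMeasure ha hr hx, ofReal_cpow hx']
  push_cast
  rfl

lemma integral_cexp_I_mul_add_mul_gaussianReal (t s : ℝ) (c : ℂ) :
    ∫ z, cexp (I * t * (c + s * z)) ∂gaussianReal 0 1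
      = cexp (I * t * c - t ^ 2 * s ^ 2 / 2) := by
  calc ∫ z, cexp (I * t * (c + s * z)) ∂gaussianReal 0 1
      = ∫ z, cexp (I * t * c) * cexp (↑(t * s) * z * I) ∂gaussianReal 0 1 := by
        congr with z
        rw [← exp_add]
        push_cast
        ring_nf
    _ = cexp (I * t * c) * charFun (gaussianReal 0 1) (t * s) := by
        rw [integral_const_mul, charFun_apply_real]
    _ = cexp (I * t * c - t ^ 2 * s ^ 2 / 2) := by
        rw [charFun_gaussianReal, ← exp_add]
        push_cast
        ring_nf

lemma IndepFun.integral_comp_eq_integral_integral {Ω α β E : Type*} [MeasurableSpace Ω]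
    [MeasurableSpace α] [MeasurableSpace β] [NormedAddCommGroup E] [NormedSpace ℝ E]
    {P : Measure Ω} [IsFiniteMeasure P] {X : Ω → α} {Y : Ω → β} (hXY : IndepFun X Y P)
    (hX : AEMeasurable X P) (hY : AEMeasurable Y P) {f : α × β → E}
    (hf : Integrable f ((P.map X).prod (P.map Y))) :
    ∫ ω, f (X ω, Y ω) ∂P = ∫ x, ∫ y, f (x, y) ∂P.map Y ∂P.map X := by
  have hmap := (indepFun_iff_map_prod_eq_prod_map_map hX hY).mp hXY
  rw [← integral_map (hX.prodMk hY) (hmap ▸ hf.aestronglyMeasurable), hmap, integral_prod _ hf]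

end ProbabilityTheory

theorem charFun_varianceGamma_general
    {Ω : Type*} [MeasurableSpace Ω] (P : Measure Ω) [IsProbabilityMeasure P]
    (α β θ σ : ℝ) (hα : 0 < α) (hβ : 0 < β)
    (V Z : Ω → ℝ) (hVm : Measurable V) (hZm : Measurable Z)
    (hV : Measure.map V P = gammaMeasure α β)
    (hZ : Measure.map Z P = gaussianReal 0 1)
    (hindep : IndepFun V Z P) (t : ℝ) :
    ∫ ω, Complex.exp (Complex.I * t * (θ * V ω + σ * Real.sqrt (V ω) * Z ω)) ∂P
      = ((1 : ℂ) - Complex.I * θ * t / β + t ^ 2 * σ ^ 2 / (2 * β)) ^ (-(α : ℂ)) := by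
  have := isProbabilityMeasure_gammaMeasure hα hβ
  have hf : Integrable (fun p : ℝ × ℝ ↦ cexp (I * t * (θ * p.1 + σ * Real.sqrt p.1 * p.2)))
      ((gammaMeasure α β).prod (gaussianReal 0 1)) := by
    refine .of_bound (by fun_prop) 1 (ae_of_all _ fun p ↦ le_of_eq ?_)
    rw [← norm_exp_I_mul_ofReal (t * (θ * p.1 + σ * Real.sqrt p.1 * p.2))]
    push_cast
    ring_nf
  have hre : (I * t * θ - ((t ^ 2 * σ ^ 2 / 2 : ℝ) : ℂ)).re < β := by
    rw [sub_re, ofReal_re, show (I * t * θ : ℂ).re = 0 by simp, zero_sub]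
    exact hβ.trans_le' (neg_nonpos.mpr (by positivity))
  calc ∫ ω, cexp (I * t * (θ * V ω + σ * Real.sqrt (V ω) * Z ω)) ∂P
      = ∫ v, ∫ z, cexp (I * t * (θ * v + σ * Real.sqrt v * z)) ∂gaussianReal 0 1
          ∂gammaMeasure α β := by
        rw [← hV, ← hZ] at hf ⊢
        exact hindep.integral_comp_eq_integral_integral hVm.aemeasurable hZm.aemeasurable hf
    _ = complexMGF id (gammaMeasure α β) (I * t * θ - ((t ^ 2 * σ ^ 2 / 2 : ℝ) : ℂ)) := by
        refine integral_congr_ae ?_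
        filter_upwards [ae_nonneg_gammaMeasure α β] with v hv
        rw [← ofReal_mul σ, integral_cexp_I_mul_add_mul_gaussianReal, ← ofReal_pow (σ * √v),
          mul_pow, Real.sq_sqrt hv, id]
        push_cast
        ring_nf
    _ = _ := by
        rw [complexMGF_id_gammaMeasure hα hβ hre]
        push_cast
        field_simp
        ring_nf

/-- **Proposition aVGcf.** The characteristic function of the Variance Gamma
variable `X = θV + σ√V ⬝ Z`, where `Z` is standard Gaussian and `V` is an independent
`Gamma(α, β)` variable, is `t ↦ (1 - iθt/β + t²σ²/(2β))^(-α)` (principal branch). -/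
theorem charFun_varianceGamma
    {Ω : Type*} [MeasurableSpace Ω] (P : Measure Ω) [IsProbabilityMeasure P]
    (α β θ σ : ℝ) (hα : 0 < α) (hβ : 0 < β) (hσ : 0 < σ)
    (V Z : Ω → ℝ) (hVm : Measurable V) (hZm : Measurable Z)
    (hV : Measure.map V P = gammaMeasure α β)
    (hZ : Measure.map Z P = gaussianReal 0 1)
    (hindep : IndepFun V Z P) (t : ℝ) :
    ∫ ω, Complex.exp (Complex.I * t * (θ * V ω + σ * Real.sqrt (V ω) * Z ω)) ∂P
      = ((1 : ℂ) - Complex.I * θ * t / β + t ^ 2 * σ ^ 2 / (2 * β)) ^ (-(α : ℂ)) :=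
  charFun_varianceGamma_general P α β θ σ hα hβ V Z hVm hZm hV hZ hindep t
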